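/- (Theorem 1, product-metric version) Let (X, ‖·‖) be a normed space and Y = {1,...,C} labels with metric |·|. Fix ε > 0 and equip X × Y with the metric ‖x - x'‖ + ε|y - y'|. Suppose ℓ : X × Y → R is K-Lipschitz with respect to this metric. Let Ω : X → Y be a labeling function, D = {x_1,...,x_N}, and let C(π) = {x_j : π_j = 1} with |C(π)| = B. Then (1/N)Σ_{i=1}^N ℓ(x_i, Ω(x_i)) - (1/B)Σ_{j: π_j=1} ℓ(x_j, Ω(x_j)) ≤ K·W_X(C(π), D) + ε·K·C, where W_X(C(π), D) is the 1-Wasserstein distance between the uniform measures on C(π) and D using only the feature distance ‖·‖. -/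

import Mathlib

/-!
Take any admissible plan `Γ` between the uniform measure on `D` and the uniform measure on
`C(π)`. Its marginals rewrite both averages as the single sum `∑ i j, Γ i j (ℓ_i - ℓ_j)`.
Each difference `ℓ_i - ℓ_j` is at most `K ‖x_i - x_j‖ + ε K C`, because two labels in
`{0, …, C - 1}` differ by at most `C`; as `Γ` has total mass one, the sum is at most
`K · cost(Γ) + ε K C`. Taking the infimum over `Γ` gives the bound.
-/

open Finset Pointwise

theorem abs_natCast_fin_sub_le {C : ℕ} (y y' : Fin C) :
    |((y : ℕ) : ℝ) - ((y' : ℕ) : ℝ)| ≤ C := by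
  have hy : ((y : ℕ) : ℝ) < C := by exact_mod_cast y.isLt
  have hy' : ((y' : ℕ) : ℝ) < C := by exact_mod_cast y'.isLt
  rw [abs_le]
  constructor <;> linarith [(Nat.cast_nonneg (y : ℕ) : (0 : ℝ) ≤ _),
    (Nat.cast_nonneg (y' : ℕ) : (0 : ℝ) ≤ _)]

theorem sub_le_of_abs_sub_le_label_metric {X : Type*} [Norm X] [Sub X] {C : ℕ} {ε K : ℝ}
    (hε : 0 ≤ ε) (hK : 0 ≤ K) {ℓ : X → Fin C → ℝ}
    (hℓ : ∀ (x x' : X) (y y' : Fin C),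
      |ℓ x y - ℓ x' y'| ≤ K * (‖x - x'‖ + ε * |((y : ℕ) : ℝ) - ((y' : ℕ) : ℝ)|))
    (x x' : X) (y y' : Fin C) :
    ℓ x y - ℓ x' y' ≤ K * ‖x - x'‖ + ε * K * C :=
  calc ℓ x y - ℓ x' y' ≤ K * (‖x - x'‖ + ε * |((y : ℕ) : ℝ) - ((y' : ℕ) : ℝ)|) :=
        (le_abs_self _).trans (hℓ x x' y y')
    _ ≤ K * (‖x - x'‖ + ε * C) := by gcongr; exact abs_natCast_fin_sub_le y y'
    _ = K * ‖x - x'‖ + ε * K * C := by ring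

section Transport

variable {ι κ : Type*} [Fintype ι] [Fintype κ]

/-- Its infimum is the 1-Wasserstein distance between `μ` and `ν` for the ground cost `c`. -/
def transportCosts (μ : ι → ℝ) (ν : κ → ℝ) (c : ι → κ → ℝ) : Set ℝ :=
  {t | ∃ Γ : ι → κ → ℝ, (∀ i j, 0 ≤ Γ i j) ∧ (∀ i, ∑ j, Γ i j = μ i) ∧
    (∀ j, ∑ i, Γ i j = ν j) ∧ t = ∑ i, ∑ j, c i j * Γ i j}

theorem transportCosts_nonempty {μ : ι → ℝ} {ν : κ → ℝ} (c : ι → κ → ℝ)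
    (hμ : ∀ i, 0 ≤ μ i) (hν : ∀ j, 0 ≤ ν j) (hμ₁ : ∑ i, μ i = 1) (hν₁ : ∑ j, ν j = 1) :
    (transportCosts μ ν c).Nonempty :=
  ⟨_, fun i j => μ i * ν j, fun i j => mul_nonneg (hμ i) (hν j),
    fun i => by rw [← mul_sum, hν₁, mul_one],
    fun j => by rw [← sum_mul, hμ₁, one_mul], rfl⟩

theorem sum_mul_sub_sum_mul_le_of_mem_transportCosts {μ : ι → ℝ} {ν : κ → ℝ}
    {c : ι → κ → ℝ} {f : ι → ℝ} {g : κ → ℝ} {K δ t : ℝ}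
    (h : ∀ i j, f i - g j ≤ K * c i j + δ) (hν₁ : ∑ j, ν j = 1)
    (ht : t ∈ transportCosts μ ν c) :
    ∑ i, μ i * f i - ∑ j, ν j * g j ≤ K * t + δ := by
  obtain ⟨Γ, hΓ, hrow, hcol, rfl⟩ := ht
  have hmass : ∑ i, ∑ j, Γ i j = 1 := by rw [sum_comm]; simp only [hcol, hν₁]
  calc ∑ i, μ i * f i - ∑ j, ν j * g j = ∑ i, ∑ j, Γ i j * (f i - g j) := by
        simp only [← hrow, ← hcol, sum_mul, mul_sub, sum_sub_distrib]
        rw [sum_comm (f := fun j i => Γ i j * g j)]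
    _ ≤ ∑ i, ∑ j, Γ i j * (K * c i j + δ) := by
        gcongr with i _ j _
        · exact hΓ i j
        · exact h i j
    _ = K * ∑ i, ∑ j, c i j * Γ i j + δ * ∑ i, ∑ j, Γ i j := by
        simp only [mul_sum, ← sum_add_distrib]
        congr! 2
        ring
    _ = K * ∑ i, ∑ j, c i j * Γ i j + δ := by rw [hmass, mul_one]

end Transport

theorem le_mul_sInf_add {S : Set ℝ} (hS : S.Nonempty) {a b K : ℝ} (hK : 0 ≤ K)
    (h : ∀ t ∈ S, a ≤ K * t + b) : a ≤ K * sInf S + b := by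
  rw [← smul_eq_mul, ← Real.sInf_smul_of_nonneg hK]
  suffices a - b ≤ sInf (K • S) by linarith
  refine le_csInf (hS.smul_set) ?_
  rintro _ ⟨t, ht, rfl⟩
  linarith [h t ht, smul_eq_mul K t]

theorem stmt_10_general {X : Type*} [NormedAddCommGroup X] (C N B : ℕ)
    (hB : 0 < B)
    (ε K : ℝ) (hε : 0 < ε) (hK : 0 ≤ K)
    (ℓ : X → Fin C → ℝ)
    (hℓ : ∀ (x x' : X) (y y' : Fin C),
      |ℓ x y - ℓ x' y'| ≤ K * (‖x - x'‖ + ε * |((y : ℕ) : ℝ) - ((y' : ℕ) : ℝ)|))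
    (Ω : X → Fin C) (x : Fin N → X)
    (π : Fin N → ℝ) (hπ : ∀ i, π i = 0 ∨ π i = 1) (hπB : ∑ i, π i = B) :
    (1 / N) * ∑ i, ℓ (x i) (Ω (x i)) - (1 / B) * ∑ i, π i * ℓ (x i) (Ω (x i)) ≤
      K * sInf {c : ℝ | ∃ Γ : Matrix (Fin N) (Fin N) ℝ,
          (∀ i j, 0 ≤ Γ i j) ∧ (∀ i, ∑ j, Γ i j = 1 / N) ∧
          (∀ j, ∑ i, Γ i j = π j / B) ∧
          c = ∑ i, ∑ j, ‖x i - x j‖ * Γ i j}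
        + ε * K * C := by
  have hN : (N : ℝ) ≠ 0 := by
    rintro hN
    obtain rfl : N = 0 := by exact_mod_cast hN
    simp [eq_comm, hB.ne'] at hπB
  have hπ₀ : ∀ i, 0 ≤ π i := fun i => by rcases hπ i with h | h <;> simp [h]
  have hν₁ : ∑ j, π j / B = 1 := by rw [← sum_div, hπB, div_self (by positivity)]
  have hμ₁ : ∑ _i : Fin N, (1 / N : ℝ) = 1 := by simp [hN]
  change _ ≤ K * sInf (transportCosts (fun _ => 1 / N) (fun j => π j / B)
    fun i j => ‖x i - x j‖) + _
  have hcore : (1 / B) * ∑ i, π i * ℓ (x i) (Ω (x i)) = ∑ i, π i / B * ℓ (x i) (Ω (x i)) := by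
    simp only [mul_sum, ← mul_assoc, one_div_mul_eq_div]
  rw [hcore, mul_sum]
  refine le_mul_sInf_add (transportCosts_nonempty _ (fun _ => by positivity)
    (fun j => div_nonneg (hπ₀ j) (Nat.cast_nonneg B)) hμ₁ hν₁) hK fun t ht => ?_
  refine sum_mul_sub_sum_mul_le_of_mem_transportCosts (fun i j => ?_) hν₁ ht
  exact sub_le_of_abs_sub_le_label_metric hε.le hK hℓ _ _ _ _

/-- Theorem 1 (product-metric version): if the loss `ℓ` is `K`-Lipschitz on `X × Y` with
the metric `‖x - x'‖ + ε * |y - y'|`, then the core set loss is bounded by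
`K * W_X(C(π), D) + ε * K * C`, where `W_X` is the feature-space Wasserstein distance. -/
theorem stmt_10 {X : Type*} [NormedAddCommGroup X] (C N B : ℕ) (hC : 0 < C)
    (hB : 0 < B) (hBN : B ≤ N)
    (ε K : ℝ) (hε : 0 < ε) (hK : 0 ≤ K)
    (ℓ : X → Fin C → ℝ)
    (hℓ : ∀ (x x' : X) (y y' : Fin C),
      |ℓ x y - ℓ x' y'| ≤ K * (‖x - x'‖ + ε * |((y : ℕ) : ℝ) - ((y' : ℕ) : ℝ)|))
    (Ω : X → Fin C) (x : Fin N → X)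
    (π : Fin N → ℝ) (hπ : ∀ i, π i = 0 ∨ π i = 1) (hπB : ∑ i, π i = B) :
    (1 / N) * ∑ i, ℓ (x i) (Ω (x i)) - (1 / B) * ∑ i, π i * ℓ (x i) (Ω (x i)) ≤
      K * sInf {c : ℝ | ∃ Γ : Matrix (Fin N) (Fin N) ℝ,
          (∀ i j, 0 ≤ Γ i j) ∧ (∀ i, ∑ j, Γ i j = 1 / N) ∧
          (∀ j, ∑ i, Γ i j = π j / B) ∧
          c = ∑ i, ∑ j, ‖x i - x j‖ * Γ i j}
        + ε * K * C :=
  stmt_10_general C N B hB ε K hε hK ℓ hℓ Ω x π hπ hπB
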